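/- Let K be a field of characteristic zero, let q ∈ K be a primitive κ-th root of unity, and let σ_q be the K-automorphism of K(x) determined by x ↦ qx. Let M be a finite-dimensional K(x)-vector space with a bijective σ_q-semilinear operator Σ. Then M admits a basis e with Σe = e (i.e. the q-difference module (M, Σ) is trivial) if and only if the K(x)-linear map Σ^κ : M → M is the identity. -/

import Mathlib

set_option synthInstance.maxHeartbeats 1000000
set_option maxHeartbeats 1000000

/-- Let `K` be a field of characteristic zero, `q ∈ K` a primitive `κ`-th root of unity,
and `σ` the `K`-automorphism of `K(x)` with `x ↦ qx`. A `q`-difference module `(M, S)`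
over `K(x)` (with `M` finite dimensional over `K(x)`) is trivial — i.e. admits a basis `e`
with `S e = e` — if and only if the `K(x)`-linear map `S^κ : M → M` (the `v`-curvature)
is the identity. -/
theorem trivial_iff_curvature_identity (K : Type*) [Field K] [CharZero K]
    (κ : ℕ) (hκ : 0 < κ) (q : K) (hq : IsPrimitiveRoot q κ)
    (σ : RatFunc K ≃+* RatFunc K)
    (hσ_const : ∀ a : K, σ (algebraMap K (RatFunc K) a) = algebraMap K (RatFunc K) a)
    (hσ_X : σ RatFunc.X = algebraMap K (RatFunc K) q * RatFunc.X)
    (M : Type*) [AddCommGroup M] [Module (RatFunc K) M]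
    [FiniteDimensional (RatFunc K) M]
    (S : M → M) (hS_bij : Function.Bijective S)
    (hS_add : ∀ m m' : M, S (m + m') = S m + S m')
    (hS_semilinear : ∀ (f : RatFunc K) (m : M), S (f • m) = σ f • S m) :
    (∃ (n : ℕ) (b : Module.Basis (Fin n) (RatFunc K) M), ∀ i, S (b i) = b i)
      ↔ ∀ m : M, S^[κ] m = m := by
  -- basic facts about iterates of σ
  have iter_mul : ∀ (n : ℕ) (a b : RatFunc K), (⇑σ)^[n] (a * b) = (⇑σ)^[n] a * (⇑σ)^[n] b := by
    intro n
    induction n with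
    | zero => intro a b; simp
    | succ n ih => intro a b; simp [Function.iterate_succ_apply, map_mul, ih]
  have iter_add : ∀ (n : ℕ) (a b : RatFunc K), (⇑σ)^[n] (a + b) = (⇑σ)^[n] a + (⇑σ)^[n] b := by
    intro n
    induction n with
    | zero => intro a b; simp
    | succ n ih => intro a b; simp [Function.iterate_succ_apply, map_add, ih]
  have iter_div : ∀ (n : ℕ) (a b : RatFunc K), (⇑σ)^[n] (a / b) = (⇑σ)^[n] a / (⇑σ)^[n] b := by
    intro n
    induction n with
    | zero => intro a b; simp
    | succ n ih => intro a b; simp [Function.iterate_succ_apply, map_div₀, ih]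
  have iter_one : ∀ (n : ℕ), (⇑σ)^[n] (1 : RatFunc K) = 1 := by
    intro n
    induction n with
    | zero => simp
    | succ n ih => simp [Function.iterate_succ_apply, map_one, ih]
  have iter_pow : ∀ (n k : ℕ) (a : RatFunc K), (⇑σ)^[n] (a ^ k) = ((⇑σ)^[n] a) ^ k := by
    intro n k
    induction k with
    | zero => intro a; simp [iter_one]
    | succ k ih => intro a; rw [pow_succ, iter_mul, ih, pow_succ]
  have iter_C : ∀ (n : ℕ) (a : K), (⇑σ)^[n] (algebraMap K (RatFunc K) a) = algebraMap K (RatFunc K) a := by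
    intro n
    induction n with
    | zero => intro a; simp
    | succ n ih => intro a; rw [Function.iterate_succ_apply, hσ_const, ih]
  have iter_X : ∀ (n : ℕ), (⇑σ)^[n] (RatFunc.X) = algebraMap K (RatFunc K) (q ^ n) * RatFunc.X := by
    intro n
    induction n with
    | zero => simp
    | succ n ih =>
      rw [Function.iterate_succ_apply, hσ_X, iter_mul, iter_C, ih, pow_succ]
      rw [map_mul]; ring
  -- σ^[κ] = id
  have iter_poly : ∀ (p : Polynomial K),
      (⇑σ)^[κ] (algebraMap (Polynomial K) (RatFunc K) p) = algebraMap (Polynomial K) (RatFunc K) p := by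
    intro p
    induction p using Polynomial.induction_on with
    | C a => rw [RatFunc.algebraMap_C, ← RatFunc.algebraMap_eq_C, iter_C]
    | add p r hp hr => rw [map_add, iter_add, hp, hr]
    | monomial n a _ =>
      rw [map_mul, map_pow, iter_mul, iter_pow, RatFunc.algebraMap_C,
        ← RatFunc.algebraMap_eq_C, iter_C, RatFunc.algebraMap_X, iter_X, hq.pow_eq_one,
        map_one, one_mul]
  have hσκ : ∀ f : RatFunc K, (⇑σ)^[κ] f = f := by
    intro f
    rw [← RatFunc.num_div_denom f, iter_div, iter_poly, iter_poly]
  -- basic facts about iterates of S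
  have hS0 : S 0 = 0 := by
    have := hS_add 0 0
    rw [add_zero] at this
    exact (left_eq_add.mp this)
  have iterS_add : ∀ (n : ℕ) (a b : M), S^[n] (a + b) = S^[n] a + S^[n] b := by
    intro n
    induction n with
    | zero => intro a b; simp
    | succ n ih => intro a b; simp [Function.iterate_succ_apply, hS_add, ih]
  have iterS_smul : ∀ (n : ℕ) (f : RatFunc K) (m : M), S^[n] (f • m) = (⇑σ)^[n] f • S^[n] m := by
    intro n
    induction n with
    | zero => intro f m; simp
    | succ n ih =>
      intro f m
      rw [Function.iterate_succ_apply, hS_semilinear, ih, Function.iterate_succ_apply,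
        Function.iterate_succ_apply]
  constructor
  · -- forward
    rintro ⟨n, b, hb⟩ m
    have hbfix : ∀ (i : Fin n), S^[κ] (b i) = b i := by
      intro i
      have : ∀ k : ℕ, S^[k] (b i) = b i := by
        intro k
        induction k with
        | zero => simp
        | succ k ih => rw [Function.iterate_succ_apply', ih, hb]
      exact this κ
    -- S^[κ] as an additive hom
    let T : M →+ M := AddMonoidHom.mk' (S^[κ]) (iterS_add κ)
    have hT : ∀ x, T x = S^[κ] x := fun _ => rfl
    conv_lhs => rw [← b.sum_repr m]
    rw [show S^[κ] = ⇑T from rfl, map_sum]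
    have hterm : ∀ i : Fin n, T (b.repr m i • b i) = b.repr m i • b i := by
      intro i
      rw [hT, iterS_smul, hσκ, hbfix]
    simp only [hterm]
    exact b.sum_repr m
  · -- backward
    intro hfix
    set fixedSet : Set M := {v | S v = v} with hfixedSet
    -- fixed vectors span M
    have hspan : Submodule.span (RatFunc K) fixedSet = ⊤ := by
      by_contra hne
      have hlt : Submodule.span (RatFunc K) fixedSet < ⊤ := lt_top_iff_ne_top.mpr hne
      obtain ⟨φ, hφne, hφbot⟩ :=
        Submodule.exists_dual_map_eq_bot_of_lt_top hlt inferInstance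
      apply hφne
      have hφ0 : ∀ v ∈ fixedSet, φ v = 0 := by
        intro v hv
        have : φ v ∈ Submodule.map φ (Submodule.span (RatFunc K) fixedSet) :=
          ⟨v, Submodule.subset_span hv, rfl⟩
        rw [hφbot] at this
        simpa using this
      -- Dedekind: the κ distinct characters σ^[i] are linearly independent
      have hchar_mul : ∀ i : Fin κ, ∀ a b : RatFunc K, (⇑σ)^[(i : ℕ)] (a * b)
          = (⇑σ)^[(i : ℕ)] a * (⇑σ)^[(i : ℕ)] b := fun i => iter_mul i
      let h : Fin κ → (RatFunc K →* RatFunc K) := fun i =>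
        { toFun := (⇑σ)^[(i : ℕ)], map_one' := iter_one i, map_mul' := iter_mul i }
      have hinj : Function.Injective h := by
        intro i j hij
        have hXij : (⇑σ)^[(i : ℕ)] RatFunc.X = (⇑σ)^[(j : ℕ)] RatFunc.X := by
          have := congrArg (fun ψ => ψ RatFunc.X) hij
          simpa [h] using this
        rw [iter_X, iter_X] at hXij
        have hq' : algebraMap K (RatFunc K) (q ^ (i : ℕ)) = algebraMap K (RatFunc K) (q ^ (j : ℕ)) :=
          mul_right_cancel₀ RatFunc.X_ne_zero hXij
        have : q ^ (i : ℕ) = q ^ (j : ℕ) := (algebraMap K (RatFunc K)).injective hq'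
        exact Fin.ext (hq.pow_inj i.isLt j.isLt this)
      have hli : LinearIndependent (RatFunc K) (fun i : Fin κ => ((h i : RatFunc K → RatFunc K))) :=
        (linearIndependent_monoidHom (RatFunc K) (RatFunc K)).comp h hinj
      ext m
      -- the averaged vector
      have key : ∀ g : RatFunc K, (∑ i ∈ Finset.range κ, ((⇑σ)^[i] g) • S^[i] m) ∈ fixedSet := by
        intro g
        show S _ = _
        rw [show (S (∑ i ∈ Finset.range κ, ((⇑σ)^[i] g) • S^[i] m))
            = ∑ i ∈ Finset.range κ, ((⇑σ)^[i+1] g) • S^[i+1] m from ?_]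
        · -- reindex
          have h1 : ∑ i ∈ Finset.range (κ+1), ((⇑σ)^[i] g) • S^[i] m
              = (∑ i ∈ Finset.range κ, ((⇑σ)^[i+1] g) • S^[i+1] m) + ((⇑σ)^[0] g) • S^[0] m :=
            Finset.sum_range_succ' _ κ
          have h2 : ∑ i ∈ Finset.range (κ+1), ((⇑σ)^[i] g) • S^[i] m
              = (∑ i ∈ Finset.range κ, ((⇑σ)^[i] g) • S^[i] m) + ((⇑σ)^[κ] g) • S^[κ] m :=
            Finset.sum_range_succ _ κ
          rw [h1] at h2
          rw [hσκ, hfix] at h2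
          simpa using h2
        · -- S of sum
          have : ∀ (s : Finset ℕ), S (∑ i ∈ s, ((⇑σ)^[i] g) • S^[i] m)
              = ∑ i ∈ s, ((⇑σ)^[i+1] g) • S^[i+1] m := by
            intro s
            induction s using Finset.induction_on with
            | empty => simpa using hS0
            | insert _ _ hx ih =>
              rw [Finset.sum_insert hx, hS_add, ih, Finset.sum_insert hx,
                hS_semilinear, Function.iterate_succ_apply', Function.iterate_succ_apply']
          exact this _
      -- apply φ
      have keyφ : ∀ g : RatFunc K, ∑ i ∈ Finset.range κ, ((⇑σ)^[i] g) * φ (S^[i] m) = 0 := by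
        intro g
        have := hφ0 _ (key g)
        rw [map_sum] at this
        simpa [map_smul, smul_eq_mul] using this
      have hzero : ∀ i : Fin κ, φ (S^[(i : ℕ)] m) = 0 := by
        have : (∑ i : Fin κ, φ (S^[(i : ℕ)] m) • ((h i : RatFunc K → RatFunc K))) = 0 := by
          funext g
          have := keyφ g
          rw [← Fin.sum_univ_eq_sum_range (fun i => ((⇑σ)^[i] g) * φ (S^[i] m))] at this
          simpa [h, mul_comm] using this
        exact Fintype.linearIndependent_iff.mp hli _ this
      have := hzero ⟨0, hκ⟩
      simpa using this
    -- extract a basis from the spanning fixed set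
    obtain ⟨b, hbsub, hbspan, hbli⟩ := exists_linearIndependent (RatFunc K) fixedSet
    rw [hspan] at hbspan
    have hbfin : b.Finite := hbli.setFinite
    haveI : Fintype b := hbfin.fintype
    let e : b ≃ Fin (Fintype.card b) := Fintype.equivFin b
    let B : Module.Basis b (RatFunc K) M := Module.Basis.mk hbli (by rw [Subtype.range_coe, hbspan])
    refine ⟨Fintype.card b, B.reindex e, ?_⟩
    intro i
    rw [Module.Basis.reindex_apply, show B (e.symm i) = ((e.symm i : b) : M) from Module.Basis.mk_apply _ _ _]
    exact hbsub (e.symm i).2
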